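/- arXiv:2006.04687 — 3 statements merged into one kernel-verified Lean document; each statement's English description precedes it below -/
import Mathlib

section
/- (i) For any set A ⊆ L⁰₊(μ), the polar A° is a closed, convex, solid subset of L⁰₊(μ). (ii) The bipolar A°° := {g ∈ L⁰₊(μ) : ⟨g,h⟩ ≤ 1 for all h ∈ A°} is the smallest closed, convex, solid subset of L⁰₊(μ) containing A. -/
open MeasureTheory Filter Set Topology
open scoped ENNReal Pointwise

noncomputable section

variable {Ω : Type*} [MeasurableSpace Ω]

/-- `L⁰₊(μ)`: the nonnegative (μ-a.e.) measurable functions on `Ω`,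
to be thought of as identified up to μ-a.e. equality. -/
def L0plus (μ : Measure Ω) : Set (Ω → ℝ) :=
  {g | AEMeasurable g μ ∧ 0 ≤ᵐ[μ] g}

/-- The pairing `⟨g,h⟩ = ∫_Ω g·h dμ`, valued in `[0,∞]`. -/
def muPairing (μ : Measure Ω) (g h : Ω → ℝ) : ℝ≥0∞ :=
  ∫⁻ ω, ENNReal.ofReal (g ω * h ω) ∂μ

/-- The polar `A° = {h ∈ L⁰₊(μ) : ⟨g,h⟩ ≤ 1 for all g ∈ A}` of a set `A ⊆ L⁰₊(μ)`. -/
def muPolar (μ : Measure Ω) (A : Set (Ω → ℝ)) : Set (Ω → ℝ) :=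
  {h | h ∈ L0plus μ ∧ ∀ g ∈ A, muPairing μ g h ≤ 1}

/-- A subset of `L⁰₊(μ)` is solid if it contains every element of `L⁰₊(μ)`
dominated μ-a.e. by one of its members. -/
def SolidIn (μ : Measure Ω) (A : Set (Ω → ℝ)) : Prop :=
  ∀ f ∈ A, ∀ g ∈ L0plus μ, g ≤ᵐ[μ] f → g ∈ A

/-- A subset of `L⁰₊(μ)` is closed with respect to convergence in measure `μ`. -/
def ClosedInMeasure (μ : Measure Ω) (A : Set (Ω → ℝ)) : Prop :=
  ∀ (f : ℕ → Ω → ℝ) (g : Ω → ℝ), (∀ n, f n ∈ A) → g ∈ L0plus μ →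
    TendstoInMeasure μ f atTop g → g ∈ A

/-!
Closedness of a polar is Fatou's lemma along an a.e.-convergent subsequence. For minimality:
if `g ∉ B` for a closed, convex, solid `B ∋ 0`, some truncation `g ∧ n` already lies outside `B`.
Since `L²`-convergence implies convergence in measure, `B ∩ L²` is closed and convex in `L²`,
so Hahn–Banach and Riesz give `z ∈ L²` and `u > 0` with `∫ z f < u` on `B ∩ L²` and
`∫ z (g ∧ n) > u`. Solidity allows replacing `f` by `f · 1_{z > 0}`, so `z⁺` separates as well,
and Fatou's lemma extends the bound from the bounded elements to all of `B`. Then `z⁺ / u` lies in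
`B° ⊆ A°` but pairs with `g` to more than `1`, so `g ∉ A°°`.
-/

variable {μ : Measure Ω}

lemma tendsto_min_natCast_atTop (a : ℝ) : Tendsto (fun n : ℕ => min a n) atTop (𝓝 a) := by
  obtain ⟨N, hN⟩ := exists_nat_ge a
  exact tendsto_atTop_of_eventually_const (i₀ := N) fun n hn =>
    min_eq_left (hN.trans (Nat.cast_le.2 hn))

section L0plus

lemma smul_mem_L0plus {c : ℝ} (hc : 0 ≤ c) {h : Ω → ℝ} (hh : h ∈ L0plus μ) :
    c • h ∈ L0plus μ :=
  ⟨hh.1.const_smul c, by filter_upwards [hh.2] with ω hω using smul_nonneg hc hω⟩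

lemma add_mem_L0plus {f g : Ω → ℝ} (hf : f ∈ L0plus μ) (hg : g ∈ L0plus μ) :
    f + g ∈ L0plus μ :=
  ⟨hf.1.add hg.1, by filter_upwards [hf.2, hg.2] with ω h₁ h₂ using add_nonneg h₁ h₂⟩

lemma min_natCast_mem_L0plus {f : Ω → ℝ} (hf : f ∈ L0plus μ) (n : ℕ) :
    (fun ω => min (f ω) n) ∈ L0plus μ :=
  ⟨hf.1.min aemeasurable_const, by filter_upwards [hf.2] with ω hω using le_min hω n.cast_nonneg⟩

lemma ae_norm_le_of_mem_L0plus {f : Ω → ℝ} (hf : f ∈ L0plus μ) {c : ℝ}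
    (hfc : ∀ᵐ ω ∂μ, f ω ≤ c) : ∀ᵐ ω ∂μ, ‖f ω‖ ≤ c := by
  filter_upwards [hf.2, hfc] with ω h₀ hc
  rwa [Real.norm_eq_abs, abs_of_nonneg h₀]

lemma memLp_of_mem_L0plus_of_ae_le [IsFiniteMeasure μ] {f : Ω → ℝ} (hf : f ∈ L0plus μ) {c : ℝ}
    (hfc : ∀ᵐ ω ∂μ, f ω ≤ c) (p : ℝ≥0∞) : MemLp f p μ :=
  MemLp.of_bound hf.1.aestronglyMeasurable c (ae_norm_le_of_mem_L0plus hf hfc)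

end L0plus

section Pairing

lemma muPairing_comm (g h : Ω → ℝ) : muPairing μ g h = muPairing μ h g := by
  simp_rw [muPairing, mul_comm]

lemma muPairing_mono_right {g h₁ h₂ : Ω → ℝ} (hg : 0 ≤ᵐ[μ] g) (h₁₂ : h₁ ≤ᵐ[μ] h₂) :
    muPairing μ g h₁ ≤ muPairing μ g h₂ := by
  refine lintegral_mono_ae ?_
  filter_upwards [hg, h₁₂] with ω hgω hω
  exact ENNReal.ofReal_le_ofReal (mul_le_mul_of_nonneg_left hω hgω)

lemma muPairing_mono_left {g₁ g₂ h : Ω → ℝ} (hh : 0 ≤ᵐ[μ] h) (g₁₂ : g₁ ≤ᵐ[μ] g₂) :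
    muPairing μ g₁ h ≤ muPairing μ g₂ h := by
  rw [muPairing_comm, muPairing_comm g₂]
  exact muPairing_mono_right hh g₁₂

lemma muPairing_smul_right (g h : Ω → ℝ) {c : ℝ} (hc : 0 ≤ c) :
    muPairing μ g (c • h) = ENNReal.ofReal c * muPairing μ g h := by
  rw [muPairing, muPairing, ← lintegral_const_mul' _ _ ENNReal.ofReal_ne_top]
  refine lintegral_congr fun ω => ?_
  rw [Pi.smul_apply, smul_eq_mul, mul_left_comm, ENNReal.ofReal_mul hc]

lemma muPairing_add_right {g h₁ h₂ : Ω → ℝ} (hg : g ∈ L0plus μ) (hh₁ : h₁ ∈ L0plus μ)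
    (hh₂ : 0 ≤ᵐ[μ] h₂) : muPairing μ g (h₁ + h₂) = muPairing μ g h₁ + muPairing μ g h₂ := by
  have hm : AEMeasurable (fun ω => ENNReal.ofReal (g ω * h₁ ω)) μ :=
    (hg.1.mul hh₁.1).ennreal_ofReal
  rw [muPairing, muPairing, muPairing, ← lintegral_add_left' hm]
  refine lintegral_congr_ae ?_
  filter_upwards [hg.2, hh₁.2, hh₂] with ω hgω h₁ω h₂ω
  rw [Pi.add_apply, mul_add, ENNReal.ofReal_add (mul_nonneg hgω h₁ω) (mul_nonneg hgω h₂ω)]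

lemma muPairing_le_of_tendsto_ae {g h : Ω → ℝ} {f : ℕ → Ω → ℝ} (hg : AEMeasurable g μ)
    (hf : ∀ n, AEMeasurable (f n) μ) (hfh : ∀ᵐ ω ∂μ, Tendsto (fun n => f n ω) atTop (𝓝 (h ω)))
    {c : ℝ≥0∞} (hc : ∀ n, muPairing μ g (f n) ≤ c) : muPairing μ g h ≤ c :=
  calc muPairing μ g h = ∫⁻ ω, liminf (fun n => ENNReal.ofReal (g ω * f n ω)) atTop ∂μ := by
        refine lintegral_congr_ae ?_
        filter_upwards [hfh] with ω hω
        exact ((ENNReal.continuous_ofReal.tendsto _).comp (hω.const_mul (g ω))).liminf_eq.symm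
    _ ≤ liminf (fun n => muPairing μ g (f n)) atTop :=
        lintegral_liminf_le' fun n => (hg.mul (hf n)).ennreal_ofReal
    _ ≤ c := liminf_le_of_frequently_le' (Frequently.of_forall hc)

lemma muPairing_le_of_forall_min_natCast_le {f h : Ω → ℝ} (hf : AEMeasurable f μ)
    (hh : AEMeasurable h μ) {c : ℝ≥0∞} (hc : ∀ n : ℕ, muPairing μ (fun ω => min (f ω) n) h ≤ c) :
    muPairing μ f h ≤ c := by
  rw [muPairing_comm]
  exact muPairing_le_of_tendsto_ae hh (fun n => hf.min aemeasurable_const)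
    (ae_of_all _ fun ω => tendsto_min_natCast_atTop (f ω))
    fun n => (muPairing_comm _ _).trans_le (hc n)

end Pairing

section Polar

lemma muPolar_subset_L0plus (A : Set (Ω → ℝ)) : muPolar μ A ⊆ L0plus μ :=
  fun _ hh => hh.1

lemma muPolar_anti {A B : Set (Ω → ℝ)} (hAB : A ⊆ B) : muPolar μ B ⊆ muPolar μ A :=
  fun _ hh => ⟨hh.1, fun g hg => hh.2 g (hAB hg)⟩

lemma subset_muPolar_muPolar {A : Set (Ω → ℝ)} (hA : A ⊆ L0plus μ) :
    A ⊆ muPolar μ (muPolar μ A) :=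
  fun g hg => ⟨hA hg, fun h hh => (muPairing_comm h g).trans_le (hh.2 g hg)⟩

lemma solidIn_muPolar {A : Set (Ω → ℝ)} (hA : A ⊆ L0plus μ) : SolidIn μ (muPolar μ A) :=
  fun _ hf _ hg hgf => ⟨hg, fun k hk => (muPairing_mono_right (hA hk).2 hgf).trans (hf.2 k hk)⟩

lemma convex_muPolar {A : Set (Ω → ℝ)} (hA : A ⊆ L0plus μ) : Convex ℝ (muPolar μ A) := by
  intro h₁ hh₁ h₂ hh₂ a b ha hb hab
  have ha₁ := smul_mem_L0plus ha hh₁.1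
  have hb₂ := smul_mem_L0plus hb hh₂.1
  refine ⟨add_mem_L0plus ha₁ hb₂, fun g hg => ?_⟩
  rw [muPairing_add_right (hA hg) ha₁ hb₂.2, muPairing_smul_right _ _ ha,
    muPairing_smul_right _ _ hb]
  calc ENNReal.ofReal a * muPairing μ g h₁ + ENNReal.ofReal b * muPairing μ g h₂
      ≤ ENNReal.ofReal a * 1 + ENNReal.ofReal b * 1 := by
        gcongr
        exacts [hh₁.2 g hg, hh₂.2 g hg]
    _ = 1 := by rw [mul_one, mul_one, ← ENNReal.ofReal_add ha hb, hab, ENNReal.ofReal_one]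

lemma closedInMeasure_muPolar {A : Set (Ω → ℝ)} (hA : A ⊆ L0plus μ) :
    ClosedInMeasure μ (muPolar μ A) := by
  intro f h hf hh hfh
  obtain ⟨ns, -, hns⟩ := hfh.exists_seq_tendsto_ae
  exact ⟨hh, fun g hg => muPairing_le_of_tendsto_ae (hA hg).1 (fun i => (hf (ns i)).1.1) hns
    fun i => (hf (ns i)).2 g hg⟩

lemma exists_mem_muPolar_one_lt_muPairing_of_separates {B : Set (Ω → ℝ)} {g h : Ω → ℝ}
    (hh : h ∈ L0plus μ) {u : ℝ} (hu : 0 < u) (hBh : ∀ f ∈ B, muPairing μ f h ≤ ENNReal.ofReal u)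
    (hgh : ENNReal.ofReal u < muPairing μ g h) : ∃ h' ∈ muPolar μ B, 1 < muPairing μ g h' := by
  have hu' : 0 ≤ u⁻¹ := inv_nonneg.2 hu.le
  have hscale : ENNReal.ofReal u⁻¹ * ENNReal.ofReal u = 1 := by
    rw [← ENNReal.ofReal_mul hu', inv_mul_cancel₀ hu.ne', ENNReal.ofReal_one]
  refine ⟨u⁻¹ • h, ⟨smul_mem_L0plus hu' hh, fun f hf => ?_⟩, ?_⟩
  · rw [muPairing_smul_right _ _ hu', ← hscale]
    gcongr
    exact hBh f hf
  · rw [muPairing_smul_right _ _ hu', ← hscale]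
    exact ENNReal.mul_lt_mul_right (by simpa using hu) ENNReal.ofReal_ne_top hgh

end Polar

section Solid

variable {B : Set (Ω → ℝ)}

lemma SolidIn.mem_of_ae_eq (hsol : SolidIn μ B) (hB : B ⊆ L0plus μ) {f f' : Ω → ℝ} (hf : f ∈ B)
    (hf' : AEMeasurable f' μ) (hff' : f' =ᵐ[μ] f) : f' ∈ B :=
  hsol f hf f' ⟨hf', (hB hf).2.trans hff'.symm.le⟩ hff'.le

lemma SolidIn.zero_mem (hsol : SolidIn μ B) (hB : B ⊆ L0plus μ) (hne : B.Nonempty) :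
    (0 : Ω → ℝ) ∈ B := by
  obtain ⟨f, hf⟩ := hne
  exact hsol f hf 0 ⟨aemeasurable_const, EventuallyLE.rfl⟩ (hB hf).2

lemma SolidIn.min_natCast_mem (hsol : SolidIn μ B) (hB : B ⊆ L0plus μ) {f : Ω → ℝ} (hf : f ∈ B)
    (n : ℕ) : (fun ω => min (f ω) n) ∈ B :=
  hsol f hf _ (min_natCast_mem_L0plus (hB hf) n) (ae_of_all _ fun _ => min_le_left _ _)

lemma SolidIn.indicator_mem (hsol : SolidIn μ B) (hB : B ⊆ L0plus μ) {f : Ω → ℝ} (hf : f ∈ B)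
    {s : Set Ω} (hs : MeasurableSet s) : s.indicator f ∈ B := by
  refine hsol f hf _ ⟨(hB hf).1.indicator hs, ?_⟩ ?_ <;> filter_upwards [(hB hf).2] with ω hω
  · exact Set.indicator_nonneg (fun _ _ => hω) ω
  · exact Set.indicator_apply_le' (fun _ => le_rfl) fun _ => hω

lemma ClosedInMeasure.exists_min_natCast_notMem [IsFiniteMeasure μ] (hcl : ClosedInMeasure μ B)
    {g : Ω → ℝ} (hg : g ∈ L0plus μ) (hgB : g ∉ B) : ∃ n : ℕ, (fun ω => min (g ω) n) ∉ B := by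
  by_contra! h
  exact hgB (hcl _ g h hg (tendstoInMeasure_of_tendsto_ae
    (fun n => (hg.1.min aemeasurable_const).aestronglyMeasurable)
    (ae_of_all _ fun ω => tendsto_min_natCast_atTop (g ω))))

end Solid

section Lp

variable {B : Set (Ω → ℝ)} {p : ℝ≥0∞}

lemma convex_setOf_coeFn_mem (hB : B ⊆ L0plus μ) (hsol : SolidIn μ B) (hcx : Convex ℝ B) :
    Convex ℝ {x : Lp ℝ p μ | ⇑x ∈ B} := by
  intro x hx y hy a b ha hb hab
  refine hsol.mem_of_ae_eq hB (hcx hx hy ha hb hab) (Lp.aestronglyMeasurable _).aemeasurable ?_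
  filter_upwards [Lp.coeFn_add (a • x) (b • y), Lp.coeFn_smul a x, Lp.coeFn_smul b y]
    with ω h₁ h₂ h₃
  simp only [h₁, Pi.add_apply, h₂, h₃, Pi.smul_apply]

lemma isClosed_setOf_coeFn_mem [Fact (1 ≤ p)] (hB : B ⊆ L0plus μ) (hcl : ClosedInMeasure μ B) :
    IsClosed {x : Lp ℝ p μ | ⇑x ∈ B} := by
  refine IsSeqClosed.isClosed fun x y hx hxy =>
    hcl _ _ hx ⟨(Lp.aestronglyMeasurable y).aemeasurable, ?_⟩ (tendstoInMeasure_of_tendsto_Lp hxy)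
  have hy : y ∈ Set.Ici 0 := isClosed_Ici.mem_of_tendsto hxy
    (Eventually.of_forall fun n => (Lp.coeFn_nonneg _).1 (hB (hx n)).2)
  exact (Lp.coeFn_nonneg y).2 hy

lemma L2.exists_eq_integral_mul (φ : StrongDual ℝ (Lp ℝ 2 μ)) :
    ∃ z : Lp ℝ 2 μ, ∀ x, φ x = ∫ ω, z ω * x ω ∂μ :=
  ⟨(InnerProductSpace.toDual ℝ _).symm φ, fun x => by
    rw [← InnerProductSpace.toDual_symm_apply, L2.inner_def]
    simp [mul_comm]⟩

end Lp

section Separation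

variable {B : Set (Ω → ℝ)}

lemma exists_L2_separation [IsFiniteMeasure μ] (hB : B ⊆ L0plus μ) (hcl : ClosedInMeasure μ B)
    (hcx : Convex ℝ B) (hsol : SolidIn μ B) {g : Ω → ℝ} (hg : g ∈ L0plus μ) {c : ℝ}
    (hgc : ∀ᵐ ω ∂μ, g ω ≤ c) (hgB : g ∉ B) :
    ∃ z : Lp ℝ 2 μ, ∃ u : ℝ, (∀ f ∈ B, ∀ d : ℝ, (∀ᵐ ω ∂μ, f ω ≤ d) →
      ∫ ω, z ω * f ω ∂μ < u) ∧ u < ∫ ω, z ω * g ω ∂μ := by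
  have hg₂ := memLp_of_mem_L0plus_of_ae_le hg hgc 2
  have hgS : hg₂.toLp g ∉ {x : Lp ℝ 2 μ | ⇑x ∈ B} := fun h =>
    hgB (hsol.mem_of_ae_eq hB h hg.1 hg₂.coeFn_toLp.symm)
  obtain ⟨φ, u, hφB, hφg⟩ := geometric_hahn_banach_closed_point
    (convex_setOf_coeFn_mem hB hsol hcx) (isClosed_setOf_coeFn_mem hB hcl) hgS
  obtain ⟨z, hz⟩ := L2.exists_eq_integral_mul φ
  have hφ_toLp {f : Ω → ℝ} (hf : MemLp f 2 μ) : φ (hf.toLp f) = ∫ ω, z ω * f ω ∂μ :=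
    (hz _).trans (integral_congr_ae (hf.coeFn_toLp.mono fun ω hω => by simp only [hω]))
  refine ⟨z, u, fun f hf d hfd => ?_, hφ_toLp hg₂ ▸ hφg⟩
  have hf₂ := memLp_of_mem_L0plus_of_ae_le (hB hf) hfd 2
  rw [← hφ_toLp hf₂]
  exact hφB _ (hsol.mem_of_ae_eq hB hf (Lp.aestronglyMeasurable _).aemeasurable hf₂.coeFn_toLp)

lemma muPairing_posPart_eq_ofReal_integral {z : Ω → ℝ} (hz : Integrable z μ) {f : Ω → ℝ}
    (hf : f ∈ L0plus μ) {c : ℝ} (hfc : ∀ᵐ ω ∂μ, f ω ≤ c) :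
    muPairing μ f (fun ω => max (z ω) 0) = ENNReal.ofReal (∫ ω, f ω * max (z ω) 0 ∂μ) := by
  refine (ofReal_integral_eq_lintegral_ofReal
    (hz.pos_part.bdd_mul hf.1.aestronglyMeasurable (ae_norm_le_of_mem_L0plus hf hfc)) ?_).symm
  filter_upwards [hf.2] with ω hω
  exact mul_nonneg hω (le_max_right _ _)

lemma muPairing_posPart_le (hB : B ⊆ L0plus μ) (hsol : SolidIn μ B) {z : Ω → ℝ}
    (hzm : Measurable z) (hz : Integrable z μ) {u : ℝ}
    (hzB : ∀ f ∈ B, ∀ d : ℝ, (∀ᵐ ω ∂μ, f ω ≤ d) → ∫ ω, z ω * f ω ∂μ ≤ u) {f : Ω → ℝ}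
    (hf : f ∈ B) : muPairing μ f (fun ω => max (z ω) 0) ≤ ENNReal.ofReal u := by
  refine muPairing_le_of_forall_min_natCast_le (hB hf).1
    (hzm.max measurable_const).aemeasurable fun n => ?_
  set fn := fun ω => min (f ω) (n : ℝ)
  have hfn : fn ∈ B := hsol.min_natCast_mem hB hf n
  have hfn_le : ∀ᵐ ω ∂μ, fn ω ≤ n := ae_of_all _ fun _ => min_le_right _ _
  -- cutting `fn` down to `{z > 0}` keeps it in `B` and turns `z` into `z⁺`
  have hcut : {ω | 0 < z ω}.indicator fn ∈ B :=
    hsol.indicator_mem hB hfn (measurableSet_lt measurable_const hzm)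
  have hcut_le : ∀ᵐ ω ∂μ, {ω | 0 < z ω}.indicator fn ω ≤ n := by
    filter_upwards [hfn_le] with ω hω
    exact Set.indicator_apply_le' (fun _ => hω) fun _ => n.cast_nonneg
  have hcut_eq : ∫ ω, z ω * {ω | 0 < z ω}.indicator fn ω ∂μ = ∫ ω, fn ω * max (z ω) 0 ∂μ := by
    refine integral_congr_ae (ae_of_all _ fun ω => ?_)
    by_cases hω : 0 < z ω
    · simp [Set.indicator_of_mem (show ω ∈ {ω | 0 < z ω} from hω), max_eq_left hω.le, mul_comm]
    · simp [Set.indicator_of_notMem (show ω ∉ {ω | 0 < z ω} from hω), max_eq_right (not_lt.1 hω)]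
  rw [muPairing_posPart_eq_ofReal_integral hz (hB hfn) hfn_le, ← hcut_eq]
  exact ENNReal.ofReal_le_ofReal (hzB _ hcut _ hcut_le)

lemma ofReal_lt_muPairing_posPart {z : Ω → ℝ} (hz : Integrable z μ) {g : Ω → ℝ}
    (hg : g ∈ L0plus μ) {c : ℝ} (hgc : ∀ᵐ ω ∂μ, g ω ≤ c) {u : ℝ} (hu : 0 ≤ u)
    (hzg : u < ∫ ω, z ω * g ω ∂μ) :
    ENNReal.ofReal u < muPairing μ g (fun ω => max (z ω) 0) := by
  have hgc' := ae_norm_le_of_mem_L0plus hg hgc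
  rw [muPairing_posPart_eq_ofReal_integral hz hg hgc, ENNReal.ofReal_lt_ofReal_iff_of_nonneg hu]
  refine hzg.trans_le (integral_mono_ae ?_ ?_ ?_)
  · simpa only [mul_comm] using hz.bdd_mul hg.1.aestronglyMeasurable hgc'
  · exact hz.pos_part.bdd_mul hg.1.aestronglyMeasurable hgc'
  · filter_upwards [hg.2] with ω hω
    rw [mul_comm]
    exact mul_le_mul_of_nonneg_left (le_max_left _ _) hω

lemma exists_mem_muPolar_one_lt_muPairing [IsFiniteMeasure μ] (hB : B ⊆ L0plus μ)
    (hcl : ClosedInMeasure μ B) (hcx : Convex ℝ B) (hsol : SolidIn μ B) (h0 : (0 : Ω → ℝ) ∈ B)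
    {g : Ω → ℝ} (hg : g ∈ L0plus μ) (hgB : g ∉ B) : ∃ h ∈ muPolar μ B, 1 < muPairing μ g h := by
  obtain ⟨n, hn⟩ := hcl.exists_min_natCast_notMem hg hgB
  have hgn := min_natCast_mem_L0plus hg n
  have hgn_le : ∀ᵐ ω ∂μ, min (g ω) n ≤ n := ae_of_all _ fun _ => min_le_right _ _
  obtain ⟨z, u, hzB, hzg⟩ := exists_L2_separation hB hcl hcx hsol hgn hgn_le hn
  have hu : 0 < u := by simpa using hzB 0 h0 0 EventuallyLE.rfl
  have hz : Integrable z μ := (Lp.memLp z).integrable one_le_two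
  have hzm : Measurable z := (Lp.stronglyMeasurable z).measurable
  refine exists_mem_muPolar_one_lt_muPairing_of_separates
    ⟨(hzm.max measurable_const).aemeasurable, ae_of_all _ fun _ => le_max_right _ _⟩ hu
    (fun f hf => muPairing_posPart_le hB hsol hzm hz
      (fun f hf d hfd => (hzB f hf d hfd).le) hf) ?_
  calc ENNReal.ofReal u < muPairing μ (fun ω => min (g ω) n) (fun ω => max (z ω) 0) :=
        ofReal_lt_muPairing_posPart hz hgn hgn_le hu.le hzg
    _ ≤ muPairing μ g (fun ω => max (z ω) 0) :=
        muPairing_mono_left (ae_of_all _ fun _ => le_max_right _ _)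
          (ae_of_all _ fun _ => min_le_left _ _)

lemma muPolar_muPolar_subset [IsFiniteMeasure μ] {A : Set (Ω → ℝ)} (hAne : A.Nonempty)
    (hB : B ⊆ L0plus μ) (hAB : A ⊆ B) (hcl : ClosedInMeasure μ B) (hcx : Convex ℝ B)
    (hsol : SolidIn μ B) :
    muPolar μ (muPolar μ A) ⊆ B := by
  intro g hg
  by_contra hgB
  obtain ⟨h, hhB, hgh⟩ := exists_mem_muPolar_one_lt_muPairing hB hcl hcx hsol
    (hsol.zero_mem hB (hAne.mono hAB)) hg.1 hgB
  have hhg : muPairing μ h g ≤ 1 := hg.2 h (muPolar_anti hAB hhB)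
  exact hgh.not_ge (muPairing_comm g h ▸ hhg)

end Separation

/-- **Bipolar theorem (Brannath–Schachermayer).**
(i) The polar `A°` of a set `A ⊆ L⁰₊(μ)` is a closed, convex, solid subset of `L⁰₊(μ)`.
(ii) The bipolar `A°° = (A°)°` is the smallest closed, convex, solid subset of
`L⁰₊(μ)` containing `A`. -/
theorem bipolar_theorem (μ : Measure Ω) [IsFiniteMeasure μ]
    (A : Set (Ω → ℝ)) (hA : A ⊆ L0plus μ) (hAne : A.Nonempty) :
    (muPolar μ A ⊆ L0plus μ ∧ ClosedInMeasure μ (muPolar μ A) ∧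
      Convex ℝ (muPolar μ A) ∧ SolidIn μ (muPolar μ A)) ∧
    (A ⊆ muPolar μ (muPolar μ A) ∧
      ClosedInMeasure μ (muPolar μ (muPolar μ A)) ∧
      Convex ℝ (muPolar μ (muPolar μ A)) ∧
      SolidIn μ (muPolar μ (muPolar μ A)) ∧
      ∀ B ⊆ L0plus μ, A ⊆ B → ClosedInMeasure μ B → Convex ℝ B → SolidIn μ B →
        muPolar μ (muPolar μ A) ⊆ B) :=
  have hA' := muPolar_subset_L0plus (μ := μ) A
  ⟨⟨hA', closedInMeasure_muPolar hA, convex_muPolar hA, solidIn_muPolar hA⟩,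
    subset_muPolar_muPolar hA, closedInMeasure_muPolar hA', convex_muPolar hA',
    solidIn_muPolar hA', fun _ hB hAB hcl hcx hsol =>
      muPolar_muPolar_subset hAne hB hAB hcl hcx hsol⟩
end
end

section
/- For every sequence (g̃ⁿ)_{n∈ℕ} in C there exists a sequence (gⁿ)_{n∈ℕ}, where each gⁿ is a finite convex combination of g̃ⁿ, g̃ⁿ⁺¹, …, such that (gⁿ) converges μ-a.e. to an element g ∈ C; in particular g is μ-a.e. finite. -/
open MeasureTheory Filter Set Topology
open scoped ENNReal Pointwise

noncomputable section

variable {Ω : Type*} [MeasurableSpace Ω]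

/-!
The utility `U(f) = ∫ (1 - e^{-f}) dμ` is bounded on `C` and uniformly strictly concave where
the functions stay below a level `M`: the midpoint of `a, b` gains at least
`e^{-M}/2 · (1 - e^{-α/2})²` once `min a b ≤ M` and `|a - b| ≥ α`. Pick near-maximizers `hⁿ` of
`U` on the decreasing tail hulls `conv(g̃ⁿ, g̃ⁿ⁺¹, …)`; since `sup U` over these hulls converges,
midpoints of late `hⁿ` gain almost nothing, so `|hᵐ - hⁿ| ≥ α` can only happen on a small set or
where `hᵐ > M`, which the `L¹` bound makes small by Markov. Hence `(hⁿ)` is Cauchy in measure, a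
fast subsequence converges a.e. by Borel–Cantelli, and closedness of `C` keeps the limit in `C`.
-/

def expUtility (x : ℝ) : ℝ := 1 - Real.exp (-x)

def concavityModulus (M α : ℝ) : ℝ := Real.exp (-M) / 2 * (1 - Real.exp (-α / 2)) ^ 2

lemma continuous_expUtility : Continuous expUtility :=
  continuous_const.sub (Real.continuous_exp.comp continuous_neg)

lemma expUtility_le_one (x : ℝ) : expUtility x ≤ 1 := by
  have := Real.exp_pos (-x)
  unfold expUtility
  linarith

lemma expUtility_nonneg {x : ℝ} (hx : 0 ≤ x) : 0 ≤ expUtility x := by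
  have : Real.exp (-x) ≤ 1 := Real.exp_le_one_iff.mpr (by linarith)
  unfold expUtility
  linarith

lemma expUtility_midpoint (a b : ℝ) :
    expUtility (midpoint ℝ a b)
      = (expUtility a + expUtility b) / 2 + concavityModulus (min a b) |a - b| := by
  have key : ∀ a b : ℝ, expUtility ((a + b) / 2)
      = (expUtility a + expUtility b) / 2 + concavityModulus a (b - a) := by
    intro a b
    have hb : Real.exp (-b) = Real.exp (-a) * Real.exp (-(b - a) / 2) ^ 2 := by
      rw [sq, ← Real.exp_add, ← Real.exp_add]; ring_nf
    have hmid : Real.exp (-((a + b) / 2)) = Real.exp (-a) * Real.exp (-(b - a) / 2) := by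
      rw [← Real.exp_add]; ring_nf
    unfold expUtility concavityModulus
    rw [hb, hmid]
    ring
  rw [midpoint_eq_smul_add, smul_eq_mul, invOf_eq_inv, inv_mul_eq_div]
  rcases le_total a b with hab | hab
  · rw [min_eq_left hab, abs_of_nonpos (sub_nonpos.2 hab), neg_sub]
    exact key a b
  · rw [min_eq_right hab, abs_of_nonneg (sub_nonneg.2 hab), add_comm a b,
      add_comm (expUtility a)]
    exact key b a

lemma concavityModulus_nonneg (M α : ℝ) : 0 ≤ concavityModulus M α := by
  unfold concavityModulus
  positivity

lemma concavityModulus_pos (M : ℝ) {α : ℝ} (hα : 0 < α) : 0 < concavityModulus M α := by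
  have : Real.exp (-α / 2) < 1 := Real.exp_lt_one_iff.mpr (by linarith)
  unfold concavityModulus
  have : 0 < 1 - Real.exp (-α / 2) := by linarith
  positivity

lemma concavityModulus_le_expUtility_midpoint_sub {a b M α : ℝ} (hM : min a b ≤ M)
    (hα₀ : 0 ≤ α) (hα : α ≤ |a - b|) :
    concavityModulus M α ≤ expUtility (midpoint ℝ a b) - (expUtility a + expUtility b) / 2 := by
  rw [expUtility_midpoint, add_sub_cancel_left]
  have : Real.exp (-α / 2) ≤ 1 := Real.exp_le_one_iff.mpr (by linarith)
  unfold concavityModulus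
  gcongr

lemma expUtility_midpoint_sub_nonneg (a b : ℝ) :
    0 ≤ expUtility (midpoint ℝ a b) - (expUtility a + expUtility b) / 2 :=
  (concavityModulus_nonneg _ _).trans
    (concavityModulus_le_expUtility_midpoint_sub le_rfl (abs_nonneg _) le_rfl)

section L0plus

variable {μ : Measure Ω}

lemma convex_L0plus : Convex ℝ (L0plus μ) := by
  rintro f ⟨hf, hf₀⟩ g ⟨hg, hg₀⟩ a b ha hb -
  refine ⟨(hf.const_smul a).add (hg.const_smul b), ?_⟩
  filter_upwards [hf₀, hg₀] with ω hfω hgω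
  exact add_nonneg (mul_nonneg ha hfω) (mul_nonneg hb hgω)

lemma mem_L0plus_of_tendsto_ae {f : ℕ → Ω → ℝ} {g : Ω → ℝ} (hf : ∀ n, f n ∈ L0plus μ)
    (hfg : ∀ᵐ ω ∂μ, Tendsto (fun n => f n ω) atTop (𝓝 (g ω))) : g ∈ L0plus μ := by
  refine ⟨aemeasurable_of_tendsto_metrizable_ae atTop (fun n => (hf n).1) hfg, ?_⟩
  filter_upwards [hfg, ae_all_iff.2 fun n => (hf n).2] with ω hω hf₀
  exact ge_of_tendsto' hω hf₀

def expectedUtility (μ : Measure Ω) (f : Ω → ℝ) : ℝ := ∫ ω, expUtility (f ω) ∂μ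

variable [IsFiniteMeasure μ]

lemma integrable_expUtility_comp {f : Ω → ℝ} (hf : f ∈ L0plus μ) :
    Integrable (fun ω => expUtility (f ω)) μ := by
  refine (integrable_const 1).mono'
    (continuous_expUtility.measurable.comp_aemeasurable hf.1).aestronglyMeasurable ?_
  filter_upwards [hf.2] with ω hω
  rw [Real.norm_of_nonneg (expUtility_nonneg hω)]
  exact expUtility_le_one _

lemma expectedUtility_mem_Icc {f : Ω → ℝ} (hf : f ∈ L0plus μ) :
    expectedUtility μ f ∈ Icc 0 (μ.real univ) := by
  refine ⟨integral_nonneg_of_ae (hf.2.mono fun _ hω => expUtility_nonneg hω), ?_⟩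
  simpa [expectedUtility] using integral_mono_ae (integrable_expUtility_comp hf)
    (integrable_const 1) (ae_of_all _ fun ω => expUtility_le_one (f ω))

lemma measure_le_expectedUtility_midpoint_sub {f g : Ω → ℝ} (hf : f ∈ L0plus μ)
    (hg : g ∈ L0plus μ) (M : ℝ) {α : ℝ} (hα : 0 < α) :
    μ {ω | min (f ω) (g ω) ≤ M ∧ α ≤ |f ω - g ω|}
      ≤ ENNReal.ofReal ((expectedUtility μ (midpoint ℝ f g)
          - (expectedUtility μ f + expectedUtility μ g) / 2) / concavityModulus M α) := by
  set G : Ω → ℝ := fun ω =>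
    expUtility (midpoint ℝ (f ω) (g ω)) - (expUtility (f ω) + expUtility (g ω)) / 2
  have hfg := integrable_expUtility_comp hf
  have hgg := integrable_expUtility_comp hg
  have hmid := integrable_expUtility_comp (convex_L0plus.midpoint_mem hf hg)
  have hGint : Integrable G μ := hmid.sub ((hfg.add hgg).div_const 2)
  have hG : ∫ ω, G ω ∂μ = expectedUtility μ (midpoint ℝ f g)
      - (expectedUtility μ f + expectedUtility μ g) / 2 := by
    unfold expectedUtility
    rw [← integral_add hfg hgg, ← integral_div]
    exact integral_sub hmid ((hfg.add hgg).div_const 2)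
  have hβ := concavityModulus_pos M hα
  rw [← hG, ENNReal.ofReal_div_of_pos hβ,
    ENNReal.le_div_iff_mul_le (Or.inl (ENNReal.ofReal_pos.2 hβ).ne')
      (Or.inl ENNReal.ofReal_ne_top),
    ofReal_integral_eq_lintegral_ofReal hGint
      (ae_of_all _ fun ω => expUtility_midpoint_sub_nonneg _ _), mul_comm]
  calc ENNReal.ofReal (concavityModulus M α) * μ {ω | min (f ω) (g ω) ≤ M ∧ α ≤ |f ω - g ω|}
      ≤ ENNReal.ofReal (concavityModulus M α)
          * μ {ω | ENNReal.ofReal (concavityModulus M α) ≤ ENNReal.ofReal (G ω)} := by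
        refine mul_le_mul_right (measure_mono fun ω hω => ?_) _
        exact ENNReal.ofReal_le_ofReal
          (concavityModulus_le_expUtility_midpoint_sub hω.1 hα.le hω.2)
    _ ≤ ∫⁻ ω, ENNReal.ofReal (G ω) ∂μ :=
        mul_meas_ge_le_lintegral₀ hGint.aemeasurable.ennreal_ofReal _

end L0plus

lemma exists_forall_measure_lt_le_of_lintegral_le (μ : Measure Ω) {K : ℝ≥0∞} (hK : K ≠ ⊤)
    {ε : ℝ} (hε : 0 < ε) :
    ∃ M : ℝ, ∀ f : Ω → ℝ, AEMeasurable f μ → ∫⁻ ω, ENNReal.ofReal (f ω) ∂μ ≤ K →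
      μ {ω | M < f ω} ≤ ENNReal.ofReal ε := by
  set M : ℝ := K.toReal / ε + 1
  have hM : 0 < M := by positivity
  refine ⟨M, fun f hf hfK => ?_⟩
  calc μ {ω | M < f ω} ≤ μ {ω | ENNReal.ofReal M ≤ ENNReal.ofReal (f ω)} :=
        measure_mono fun ω hω => ENNReal.ofReal_le_ofReal (le_of_lt hω)
    _ ≤ (∫⁻ ω, ENNReal.ofReal (f ω) ∂μ) / ENNReal.ofReal M :=
        meas_ge_le_lintegral_div hf.ennreal_ofReal (ENNReal.ofReal_pos.2 hM).ne'
          ENNReal.ofReal_ne_top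
    _ ≤ ENNReal.ofReal ε := by
        refine ENNReal.div_le_of_le_mul (hfK.trans ?_)
        rw [← ENNReal.ofReal_mul hε.le, ← ENNReal.ofReal_toReal hK]
        refine ENNReal.ofReal_le_ofReal ?_
        rw [mul_add, mul_div_cancel₀ _ hε.ne']
        linarith

theorem exists_nearMaximizers_midpoint_le {E : Type*} [AddCommGroup E] [Module ℝ E]
    (U : E → ℝ) {S : ℕ → Set E} (hS : Antitone S) (hSconv : ∀ n, Convex ℝ (S n))
    (hSne : ∀ n, (S n).Nonempty) (hU : BddAbove (U '' S 0)) (hU' : BddBelow (U '' S 0)) :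
    ∃ h : ℕ → E, (∀ n, h n ∈ S n) ∧ ∀ η > 0, ∃ N, ∀ m ≥ N, ∀ n ≥ N,
      U (midpoint ℝ (h m) (h n)) ≤ (U (h m) + U (h n)) / 2 + η := by
  set s : ℕ → ℝ := fun n => sSup (U '' S n)
  have hbdd : ∀ n, BddAbove (U '' S n) := fun n => hU.mono (image_mono (hS (Nat.zero_le n)))
  have hne : ∀ n, (U '' S n).Nonempty := fun n => (hSne n).image U
  have hs : Antitone s := fun m n hmn => csSup_le_csSup (hbdd m) (hne n) (image_mono (hS hmn))
  obtain ⟨b, hb⟩ := hU'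
  have hsb : BddBelow (range s) := by
    refine ⟨b, forall_mem_range.2 fun n => ?_⟩
    obtain ⟨x, hx⟩ := hSne n
    exact (hb (mem_image_of_mem U (hS (Nat.zero_le n) hx))).trans
      (le_csSup (hbdd n) (mem_image_of_mem U hx))
  have hnear : ∀ n : ℕ, ∃ x ∈ S n, s n - 1 / (n + 1) < U x := fun n => by
    obtain ⟨_, ⟨x, hx, rfl⟩, hlt⟩ :=
      exists_lt_of_lt_csSup (hne n) (sub_lt_self (s n) Nat.one_div_pos_of_nat)
    exact ⟨x, hx, hlt⟩
  choose h hhS hhU using hnear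
  refine ⟨h, hhS, fun η hη => ?_⟩
  obtain ⟨N₁, hN₁⟩ := exists_lt_of_ciInf_lt (lt_add_of_pos_right (⨅ n, s n) (half_pos hη))
  obtain ⟨N₂, hN₂⟩ := exists_nat_one_div_lt (half_pos hη)
  refine ⟨max N₁ N₂, fun m hm n hn => ?_⟩
  have hmid : U (midpoint ℝ (h m) (h n)) ≤ s (max N₁ N₂) :=
    le_csSup (hbdd _) (mem_image_of_mem U
      ((hSconv _).midpoint_mem (hS hm (hhS m)) (hS hn (hhS n))))
  have hnear : ∀ k ≥ max N₁ N₂, (⨅ n, s n) - η / 2 < U (h k) := fun k hk => by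
    have : 1 / ((k : ℝ) + 1) ≤ 1 / ((N₂ : ℝ) + 1) :=
      Nat.one_div_le_one_div (le_of_max_le_right hk)
    linarith [hhU k, ciInf_le hsb k]
  linarith [hnear m hm, hnear n hn, hs (le_max_left N₁ N₂)]

def CauchyInMeasure {α E : Type*} [MeasurableSpace α] [PseudoMetricSpace E] (μ : Measure α)
    (f : ℕ → α → E) : Prop :=
  ∀ δ > 0, ∀ ε > 0, ∃ N, ∀ m ≥ N, ∀ n ≥ N,
    μ {x | δ ≤ dist (f m x) (f n x)} ≤ ENNReal.ofReal ε

theorem CauchyInMeasure.exists_strictMono_ae_cauchySeq {α E : Type*} [MeasurableSpace α]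
    [PseudoMetricSpace E] {μ : Measure α} {f : ℕ → α → E} (hf : CauchyInMeasure μ f) :
    ∃ φ : ℕ → ℕ, StrictMono φ ∧ ∀ᵐ x ∂μ, CauchySeq fun k => f (φ k) x := by
  have hev : ∀ k : ℕ, ∀ᶠ N in atTop, ∀ m ≥ N, ∀ n ≥ N,
      μ {x | (1 / 2 : ℝ) ^ k ≤ dist (f m x) (f n x)} ≤ ENNReal.ofReal ((1 / 2) ^ k) := fun k => by
    obtain ⟨N, hN⟩ := hf ((1 / 2) ^ k) (by positivity) ((1 / 2) ^ k) (by positivity)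
    exact eventually_atTop.2 ⟨N, fun j hj m hm n hn => hN m (hj.trans hm) n (hj.trans hn)⟩
  obtain ⟨φ, hφ, hφN⟩ := extraction_forall_of_eventually hev
  have hsum : ∑' k, μ {x | (1 / 2 : ℝ) ^ k ≤ dist (f (φ k) x) (f (φ (k + 1)) x)} ≠ ⊤ := by
    refine ne_top_of_le_ne_top ?_
      (ENNReal.tsum_le_tsum fun k => hφN k _ le_rfl _ (hφ.monotone k.le_succ))
    rw [← ENNReal.ofReal_tsum_of_nonneg (fun k => by positivity) summable_geometric_two]
    exact ENNReal.ofReal_ne_top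
  refine ⟨φ, hφ, ?_⟩
  filter_upwards [ae_eventually_notMem hsum] with x hx
  refine cauchySeq_of_summable_dist (summable_geometric_two.of_norm_bounded_eventually_nat ?_)
  filter_upwards [hx] with k hk
  rw [Real.norm_of_nonneg dist_nonneg]
  exact (not_le.1 hk).le

section Komlos

variable {μ : Measure Ω} [IsFiniteMeasure μ]

theorem cauchyInMeasure_of_expectedUtility_midpoint_le {h : ℕ → Ω → ℝ}
    (hh : ∀ n, h n ∈ L0plus μ) {K : ℝ≥0∞} (hK : K ≠ ⊤)
    (hhK : ∀ n, ∫⁻ ω, ENNReal.ofReal (h n ω) ∂μ ≤ K)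
    (hgap : ∀ η > 0, ∃ N, ∀ m ≥ N, ∀ n ≥ N, expectedUtility μ (midpoint ℝ (h m) (h n))
      ≤ (expectedUtility μ (h m) + expectedUtility μ (h n)) / 2 + η) :
    CauchyInMeasure μ h := by
  intro α hα ε hε
  obtain ⟨M, hM⟩ := exists_forall_measure_lt_le_of_lintegral_le μ hK (half_pos hε)
  have hβ := concavityModulus_pos M hα
  obtain ⟨N, hN⟩ := hgap (ε / 2 * concavityModulus M α) (by positivity)
  refine ⟨N, fun m hm n hn => ?_⟩
  have hclose : μ {ω | min (h m ω) (h n ω) ≤ M ∧ α ≤ |h m ω - h n ω|}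
      ≤ ENNReal.ofReal (ε / 2) := by
    refine (measure_le_expectedUtility_midpoint_sub (hh m) (hh n) M hα).trans
      (ENNReal.ofReal_le_ofReal ((div_le_iff₀ hβ).2 ?_))
    linarith [hN m hm n hn]
  calc μ {ω | α ≤ dist (h m ω) (h n ω)}
      ≤ μ ({ω | min (h m ω) (h n ω) ≤ M ∧ α ≤ |h m ω - h n ω|} ∪ {ω | M < h m ω}) := by
        refine measure_mono fun ω hω => ?_
        by_cases hmin : min (h m ω) (h n ω) ≤ M
        · exact Or.inl ⟨hmin, hω⟩
        · exact Or.inr ((not_le.1 hmin).trans_le (min_le_left _ _))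
    _ ≤ ENNReal.ofReal (ε / 2) + ENNReal.ofReal (ε / 2) :=
        (measure_union_le _ _).trans (add_le_add hclose (hM _ (hh m).1 (hhK m)))
    _ = ENNReal.ofReal ε := by
        rw [← ENNReal.ofReal_add (by positivity) (by positivity), add_halves]

theorem exists_mem_convexHull_tail_ae_cauchySeq {C : Set (Ω → ℝ)} (hCsub : C ⊆ L0plus μ)
    (hCconv : Convex ℝ C)
    (hCbdd : ∃ K : ℝ≥0∞, K ≠ ⊤ ∧ ∀ g ∈ C, ∫⁻ ω, ENNReal.ofReal (g ω) ∂μ ≤ K)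
    {f : ℕ → Ω → ℝ} (hf : ∀ n, f n ∈ C) :
    ∃ g : ℕ → Ω → ℝ, (∀ n, g n ∈ convexHull ℝ (f '' Ici n)) ∧
      ∀ᵐ ω ∂μ, CauchySeq fun n => g n ω := by
  obtain ⟨K, hK, hCK⟩ := hCbdd
  set S : ℕ → Set (Ω → ℝ) := fun n => convexHull ℝ (f '' Ici n)
  have hS : Antitone S := fun m n hmn => convexHull_mono (image_mono (Ici_subset_Ici.2 hmn))
  have hSC : ∀ n, S n ⊆ C := fun n => convexHull_min (image_subset_iff.2 fun k _ => hf k) hCconv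
  have hU : ∀ x ∈ S 0, expectedUtility μ x ∈ Icc 0 (μ.real univ) := fun x hx =>
    expectedUtility_mem_Icc (hCsub (hSC 0 hx))
  obtain ⟨h, hhS, hgap⟩ := exists_nearMaximizers_midpoint_le (expectedUtility μ) hS
    (fun n => convex_convexHull ℝ _)
    (fun n => ⟨f n, subset_convexHull ℝ _ (mem_image_of_mem f self_mem_Ici)⟩)
    ⟨μ.real univ, forall_mem_image.2 fun x hx => (hU x hx).2⟩
    ⟨0, forall_mem_image.2 fun x hx => (hU x hx).1⟩
  obtain ⟨φ, hφ, hφcauchy⟩ := (cauchyInMeasure_of_expectedUtility_midpoint_le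
    (fun n => hCsub (hSC n (hhS n))) hK (fun n => hCK _ (hSC n (hhS n))) hgap
    ).exists_strictMono_ae_cauchySeq
  exact ⟨fun k => h (φ k), fun k => hS (hφ.id_le k) (hhS (φ k)), hφcauchy⟩

end Komlos

theorem compactness_lemma_primal_general (μ : Measure Ω) [IsFiniteMeasure μ]
    (C : Set (Ω → ℝ))
    (hCsub : C ⊆ L0plus μ) (hCconv : Convex ℝ C) (hCclosed : ClosedInMeasure μ C)
    (hCbddL1 : ∃ K : ℝ≥0∞, K ≠ ⊤ ∧ ∀ g ∈ C, ∫⁻ ω, ENNReal.ofReal (g ω) ∂μ ≤ K)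
    (gt : ℕ → Ω → ℝ) (hgt : ∀ n, gt n ∈ C) :
    ∃ (g : ℕ → Ω → ℝ) (glim : Ω → ℝ),
      (∀ n, g n ∈ convexHull ℝ (gt '' Ici n)) ∧
      glim ∈ C ∧
      ∀ᵐ ω ∂μ, Tendsto (fun n => g n ω) atTop (𝓝 (glim ω)) := by
  obtain ⟨g, hgS, hgcauchy⟩ := exists_mem_convexHull_tail_ae_cauchySeq hCsub hCconv hCbddL1 hgt
  have hgC : ∀ n, g n ∈ C := fun n =>
    convexHull_min (image_subset_iff.2 fun k _ => hgt k) hCconv (hgS n)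
  set glim : Ω → ℝ := fun ω => limUnder atTop fun n => g n ω
  have hlim : ∀ᵐ ω ∂μ, Tendsto (fun n => g n ω) atTop (𝓝 (glim ω)) :=
    hgcauchy.mono fun ω hω => hω.tendsto_limUnder
  refine ⟨g, glim, hgS, hCclosed g glim hgC ?_ ?_, hlim⟩
  · exact mem_L0plus_of_tendsto_ae (fun n => hCsub (hgC n)) hlim
  · exact tendstoInMeasure_of_tendsto_ae (fun n => (hCsub (hgC n)).1.aestronglyMeasurable) hlim

/-- **Compactness lemma for `C`.** For every sequence `(g̃ⁿ)` in `C` there is a sequence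
`(gⁿ)` of finite convex combinations `gⁿ ∈ conv(g̃ⁿ, g̃ⁿ⁺¹, …)` converging μ-a.e. to an
element `g ∈ C` (in particular `g` is μ-a.e. finite). -/
theorem compactness_lemma_primal (μ : Measure Ω) [IsFiniteMeasure μ]
    (C D : Set (Ω → ℝ))
    (hCsub : C ⊆ L0plus μ) (hDsub : D ⊆ L0plus μ)
    (hCconv : Convex ℝ C) (hDconv : Convex ℝ D)
    (hCsolid : SolidIn μ C) (hDsolid : SolidIn μ D)
    (hCclosed : ClosedInMeasure μ C) (hDclosed : ClosedInMeasure μ D)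
    (hCpolar : C = muPolar μ D) (hDpolar : D = muPolar μ C)
    (hCbddL1 : ∃ K : ℝ≥0∞, K ≠ ⊤ ∧ ∀ g ∈ C, ∫⁻ ω, ENNReal.ofReal (g ω) ∂μ ≤ K)
    (hDbddL0 : ∀ ε : ℝ≥0∞, 0 < ε → ∃ M : ℝ, ∀ h ∈ D, μ {ω | M < h ω} ≤ ε)
    (gt : ℕ → Ω → ℝ) (hgt : ∀ n, gt n ∈ C) :
    ∃ (g : ℕ → Ω → ℝ) (glim : Ω → ℝ),
      (∀ n, g n ∈ convexHull ℝ (gt '' Ici n)) ∧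
      glim ∈ C ∧
      ∀ᵐ ω ∂μ, Tendsto (fun n => g n ω) atTop (𝓝 (glim ω)) :=
  compactness_lemma_primal_general μ C hCsub hCconv hCclosed hCbddL1 gt hgt
end
end

section
/- If the process M_t := N_t + ∫₀^t c_s Y_s ds, t ≥ 0, is a martingale with respect to (ℱ_t)_{t≥0} with M₀ = x almost surely for a constant x > 0, and E[∫₀^∞ c_t Y_t dt] = x, then: (a) lim_{t→∞} E[N_t] = 0; (b) for every t ≥ 0, M_t = E[∫₀^∞ c_s Y_s ds | ℱ_t] almost surely, so M is a uniformly integrable martingale; and (c) for every t ≥ 0, N_t = E[∫_t^∞ c_s Y_s ds | ℱ_t] almost surely. -/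
/-!
Write `C = ∫₀^∞ c Y`, `I_t = ∫₀^t c Y` and `R_t = ∫_t^∞ c Y`, so that `C = I_t + R_t` and
`M_t - C = N_t - R_t` with `N_t, R_t ≥ 0`. Since `E M_t = E M_0 = x = E C`, this gives
`E N_t = E R_t`, which tends to `0` by dominated convergence. Hence
`‖M_t - C‖₁ ≤ E N_t + E R_t → 0`, and a martingale converging in `L¹` to `C` is closed by it:
`M_t = E[C | ℱ_t]`. Subtracting `I_t`, which is `ℱ_t`-measurable because `c Y` is progressive,
gives (c).
-/

open MeasureTheory Filter Set Topology
open scoped ENNReal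

namespace MeasureTheory.IsStronglyProgressive

variable {Ω E : Type*} {mΩ : MeasurableSpace Ω} {ℱ : Filtration ℝ mΩ} {f : ℝ → Ω → E}

theorem stronglyMeasurable_comp_min [TopologicalSpace E] (hf : IsStronglyProgressive ℱ f)
    (t : ℝ) {m : MeasurableSpace Ω} (hm : ℱ t ≤ m) :
    StronglyMeasurable[Real.measurableSpace.prod m] fun p : ℝ × Ω => f (min p.1 t) p.2 := by
  have hclamp : Measurable[Real.measurableSpace.prod m, Subtype.instMeasurableSpace.prod (ℱ t)]
      fun p : ℝ × Ω => ((⟨min p.1 t, mem_Iic.2 (min_le_right _ _)⟩ : Iic t), p.2) :=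
    (measurable_fst.min measurable_const).subtype_mk.prodMk
      ((measurable_id'' hm).comp measurable_snd)
  exact (hf t).comp_measurable hclamp

theorem stronglyMeasurable_uncurry [TopologicalSpace E]
    [TopologicalSpace.PseudoMetrizableSpace E] (hf : IsStronglyProgressive ℱ f) :
    StronglyMeasurable (Function.uncurry f) := by
  refine stronglyMeasurable_of_tendsto atTop
    (fun n : ℕ => hf.stronglyMeasurable_comp_min n (ℱ.le n)) (tendsto_pi_nhds.2 fun p => ?_)
  refine tendsto_const_nhds.congr' ?_
  filter_upwards [tendsto_natCast_atTop_atTop.eventually_ge_atTop p.1] with n hn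
  rw [min_eq_left hn]
  rfl

theorem stronglyMeasurable_setIntegral_Ioc [NormedAddCommGroup E] [NormedSpace ℝ E]
    (hf : IsStronglyProgressive ℱ f) (a t : ℝ) :
    StronglyMeasurable[ℱ t] fun ω => ∫ s in Ioc a t, f s ω := by
  let : MeasurableSpace Ω := ℱ t
  have h := (hf.stronglyMeasurable_comp_min t le_rfl).integral_prod_left'
    (μ := volume.restrict (Ioc a t))
  convert h using 2 with ω
  exact setIntegral_congr_fun measurableSet_Ioc fun s hs => by simp only [min_eq_left hs.2]

end MeasureTheory.IsStronglyProgressive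

section Fubini

variable {α β E : Type*} {mα : MeasurableSpace α} {mβ : MeasurableSpace β}
  {μ : Measure α} {ν : Measure β} [SFinite ν]

theorem integrable_prod_of_lintegral_lintegral_ne_top {f : α × β → ℝ}
    (hf : AEStronglyMeasurable f (μ.prod ν)) (hf0 : 0 ≤ f)
    (h : ∫⁻ a, ∫⁻ b, ENNReal.ofReal (f (a, b)) ∂ν ∂μ ≠ ∞) : Integrable f (μ.prod ν) := by
  refine ⟨hf, ?_⟩
  rw [hasFiniteIntegral_iff_ofReal (ae_of_all _ hf0),
    lintegral_prod _ hf.aemeasurable.ennreal_ofReal]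
  exact h.lt_top

theorem integral_integral_eq_toReal_lintegral_lintegral [SFinite μ] {f : α × β → ℝ}
    (hf : Integrable f (μ.prod ν)) (hf0 : 0 ≤ f) :
    ∫ a, ∫ b, f (a, b) ∂ν ∂μ = (∫⁻ a, ∫⁻ b, ENNReal.ofReal (f (a, b)) ∂ν ∂μ).toReal := by
  rw [← integral_prod _ hf, integral_eq_lintegral_of_nonneg_ae (ae_of_all _ hf0)
    hf.aestronglyMeasurable, lintegral_prod _ hf.aemeasurable.ennreal_ofReal]

variable [NormedAddCommGroup E] [NormedSpace ℝ E]

theorem MeasureTheory.Integrable.integrable_setIntegral_prod_of_subset {f : α × β → E}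
    {s t : Set β} (hf : Integrable f (μ.prod (ν.restrict t))) (hst : s ⊆ t) :
    Integrable (fun a => ∫ b in s, f (a, b) ∂ν) μ :=
  (hf.mono_measure (Measure.prod_mono le_rfl (Measure.restrict_mono hst le_rfl))).integral_prod_left

end Fubini

section Tails

variable {Ω E : Type*} {mΩ : MeasurableSpace Ω} {μ : Measure Ω} [SFinite μ]
  [NormedAddCommGroup E] [NormedSpace ℝ E]

theorem setIntegral_Ioi_eq_setIntegral_Ioc_add_setIntegral_Ioi {g : ℝ → E} {a t : ℝ}
    (hg : IntegrableOn g (Ioi a)) (hat : a ≤ t) :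
    ∫ s in Ioi a, g s = (∫ s in Ioc a t, g s) + ∫ s in Ioi t, g s := by
  rw [← Ioc_union_Ioi_eq_Ioi hat, setIntegral_union Ioc_disjoint_Ioi_same measurableSet_Ioi
    (hg.mono_set Ioc_subset_Ioi_self) (hg.mono_set (Ioi_subset_Ioi hat))]

theorem tendsto_integral_setIntegral_Ioi_atTop {f : Ω × ℝ → E} {a : ℝ}
    (hf : Integrable f (μ.prod (volume.restrict (Ioi a)))) :
    Tendsto (fun t => ∫ ω, (∫ s in Ioi t, f (ω, s)) ∂μ) atTop (𝓝 0) := by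
  rw [← integral_zero Ω E]
  refine tendsto_integral_filter_of_dominated_convergence
    (fun ω => ∫ s in Ioi a, ‖f (ω, s)‖) ?_ ?_ hf.norm.integral_prod_left
    (ae_of_all _ fun ω => tendsto_integral_Ioi_zero tendsto_id)
  · filter_upwards [eventually_ge_atTop a] with t ht
    exact (hf.integrable_setIntegral_prod_of_subset (Ioi_subset_Ioi ht)).aestronglyMeasurable
  · filter_upwards [eventually_ge_atTop a] with t ht
    filter_upwards [hf.prod_right_ae] with ω hω
    exact (norm_integral_le_integral_norm _).trans (setIntegral_mono_set hω.norm
      (ae_of_all _ fun _ => norm_nonneg _) (Ioi_subset_Ioi ht).eventuallyLE)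

end Tails

section Closure

variable {Ω ι : Type*} {m mΩ : MeasurableSpace Ω} {μ : Measure Ω}

theorem eLpNorm_one_eq_ofReal_integral {X : Ω → ℝ} (hX : Integrable X μ) (hX0 : 0 ≤ᵐ[μ] X) :
    eLpNorm X 1 μ = ENNReal.ofReal (∫ ω, X ω ∂μ) := by
  rw [eLpNorm_one_eq_lintegral_enorm, ofReal_integral_eq_lintegral_ofReal hX hX0]
  exact lintegral_congr_ae (hX0.mono fun ω h => Real.enorm_of_nonneg h)

theorem tendsto_eLpNorm_sub_of_integral_eq {l : Filter ι} {X Y : ι → Ω → ℝ}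
    (hX : ∀ᶠ i in l, Integrable (X i) μ ∧ 0 ≤ᵐ[μ] X i)
    (hY : ∀ᶠ i in l, Integrable (Y i) μ ∧ 0 ≤ᵐ[μ] Y i)
    (hXY : ∀ᶠ i in l, ∫ ω, X i ω ∂μ = ∫ ω, Y i ω ∂μ)
    (hY0 : Tendsto (fun i => ∫ ω, Y i ω ∂μ) l (𝓝 0)) :
    Tendsto (fun i => eLpNorm (X i - Y i) 1 μ) l (𝓝 0) := by
  have hbound : Tendsto (fun i => ENNReal.ofReal (∫ ω, Y i ω ∂μ) +
      ENNReal.ofReal (∫ ω, Y i ω ∂μ)) l (𝓝 0) := by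
    simpa using (ENNReal.tendsto_ofReal hY0).add (ENNReal.tendsto_ofReal hY0)
  refine tendsto_of_tendsto_of_tendsto_of_le_of_le' tendsto_const_nhds hbound
    (Eventually.of_forall fun _ => zero_le) ?_
  filter_upwards [hX, hY, hXY] with i ⟨hXi, hXi0⟩ ⟨hYi, hYi0⟩ hi
  calc eLpNorm (X i - Y i) 1 μ ≤ eLpNorm (X i) 1 μ + eLpNorm (Y i) 1 μ :=
        eLpNorm_sub_le hXi.aestronglyMeasurable hYi.aestronglyMeasurable le_rfl
    _ = _ := by rw [eLpNorm_one_eq_ofReal_integral hXi hXi0,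
        eLpNorm_one_eq_ofReal_integral hYi hYi0, hi]

theorem ae_eq_condExp_of_tendsto_eLpNorm {l : Filter ι} [l.NeBot] {F : ι → Ω → ℝ}
    {X Z : Ω → ℝ} (hF : ∀ᶠ i in l, Integrable (F i) μ ∧ μ[F i | m] =ᵐ[μ] X)
    (hZ : Integrable Z μ) (hFZ : Tendsto (fun i => eLpNorm (F i - Z) 1 μ) l (𝓝 0)) :
    X =ᵐ[μ] μ[Z | m] := by
  have hclose : ∀ᶠ i in l, X - μ[Z | m] =ᵐ[μ] μ[F i - Z | m] := by
    filter_upwards [hF] with i ⟨hFi, hFX⟩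
    exact (hFX.symm.sub EventuallyEq.rfl).trans (condExp_sub hFi hZ m).symm
  obtain ⟨i, hi⟩ := hclose.exists
  have hzero : eLpNorm (X - μ[Z | m]) 1 μ = 0 := by
    refine le_antisymm (ge_of_tendsto hFZ ?_) zero_le
    filter_upwards [hclose] with j hj
    exact (eLpNorm_congr_ae hj).trans_le (eLpNorm_condExp_le_eLpNorm _ le_rfl)
  rw [← sub_ae_eq_zero, ← eLpNorm_eq_zero_iff
    (integrable_condExp.aestronglyMeasurable.congr hi.symm) one_ne_zero]
  exact hzero

theorem sub_ae_eq_condExp_sub (hm : m ≤ mΩ) [SigmaFinite (μ.trim hm)] {X Z Y : Ω → ℝ}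
    (hX : X =ᵐ[μ] μ[Z | m]) (hZ : Integrable Z μ) (hY : StronglyMeasurable[m] Y)
    (hYint : Integrable Y μ) : X - Y =ᵐ[μ] μ[Z - Y | m] := by
  have h := condExp_sub hZ hYint m
  rw [condExp_of_stronglyMeasurable hm hY hYint] at h
  exact (hX.sub EventuallyEq.rfl).trans h.symm

theorem tendsto_integral_and_ae_eq_condExp_of_sub_ae_eq_sub {ℱ : Filtration ℝ mΩ}
    {M N R : ℝ → Ω → ℝ} {C : Ω → ℝ}
    (hmart : ∀ s t, 0 ≤ s → s ≤ t → μ[M t | ℱ s] =ᵐ[μ] M s)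
    (hM : ∀ t, 0 ≤ t → Integrable (M t) μ) (hC : Integrable C μ)
    (hE : ∀ t, 0 ≤ t → ∫ ω, M t ω ∂μ = ∫ ω, C ω ∂μ)
    (hMNR : ∀ t, 0 ≤ t → M t - C =ᵐ[μ] N t - R t)
    (hN : ∀ t, 0 ≤ t → Integrable (N t) μ ∧ 0 ≤ᵐ[μ] N t)
    (hR : ∀ t, 0 ≤ t → Integrable (R t) μ ∧ 0 ≤ᵐ[μ] R t)
    (hR_lim : Tendsto (fun t => ∫ ω, R t ω ∂μ) atTop (𝓝 0)) :
    Tendsto (fun t => ∫ ω, N t ω ∂μ) atTop (𝓝 0) ∧ ∀ t, 0 ≤ t → M t =ᵐ[μ] μ[C | ℱ t] := by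
  have hNR : ∀ᶠ t in atTop, ∫ ω, N t ω ∂μ = ∫ ω, R t ω ∂μ := by
    filter_upwards [eventually_ge_atTop 0] with t ht
    rw [← sub_eq_zero, ← integral_sub' (hN t ht).1 (hR t ht).1, ← integral_congr_ae (hMNR t ht),
      integral_sub' (hM t ht) hC, hE t ht, sub_self]
  have hL1 : Tendsto (fun t => eLpNorm (M t - C) 1 μ) atTop (𝓝 0) := by
    refine (tendsto_eLpNorm_sub_of_integral_eq ?_ ?_ hNR hR_lim).congr' ?_ <;>
      filter_upwards [eventually_ge_atTop 0] with t ht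
    exacts [hN t ht, hR t ht, (eLpNorm_congr_ae (hMNR t ht)).symm]
  refine ⟨hR_lim.congr' (hNR.mono fun _ h => h.symm), fun t ht => ?_⟩
  refine ae_eq_condExp_of_tendsto_eLpNorm ?_ hC hL1
  filter_upwards [eventually_ge_atTop t] with n hn
  exact ⟨hM n (ht.trans hn), hmart t n ht hn⟩

end Closure

theorem optimal_wealth_general {Ω : Type*} {mΩ : MeasurableSpace Ω}
    (μ : Measure Ω) [IsProbabilityMeasure μ] (ℱ : Filtration ℝ mΩ)
    (N c Y : ℝ → Ω → ℝ)
    (hNnonneg : ∀ t, 0 ≤ t → 0 ≤ᵐ[μ] N t)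
    (hcprog : ProgMeasurable ℱ c) (hYprog : ProgMeasurable ℱ Y)
    (hcnonneg : ∀ t ω, 0 ≤ c t ω) (hYnonneg : ∀ t ω, 0 ≤ Y t ω)
    (M : ℝ → Ω → ℝ)
    (hM : ∀ t ω, M t ω = N t ω + ∫ s in Ioc (0:ℝ) t, c s ω * Y s ω)
    (hMint : ∀ t, 0 ≤ t → Integrable (M t) μ)
    (hmart : ∀ s t, 0 ≤ s → s ≤ t → μ[M t | ℱ s] =ᵐ[μ] M s)
    (x : ℝ) (hx : 0 < x)
    (hM0 : M 0 =ᵐ[μ] fun _ => x)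
    (htotal : ∫⁻ ω, (∫⁻ s in Ioi (0:ℝ), ENNReal.ofReal (c s ω * Y s ω)) ∂μ =
      ENNReal.ofReal x) :
    Tendsto (fun t => ∫ ω, N t ω ∂μ) atTop (𝓝 0) ∧
    (∀ t, 0 ≤ t →
      M t =ᵐ[μ] μ[fun ω => ∫ s in Ioi (0:ℝ), c s ω * Y s ω | ℱ t]) ∧
    UniformIntegrable (fun (t : ↥(Ici (0:ℝ))) => M t) 1 μ ∧
    (∀ t, 0 ≤ t →
      N t =ᵐ[μ] μ[fun ω => ∫ s in Ioi t, c s ω * Y s ω | ℱ t]) := by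
  set C : Ω → ℝ := fun ω => ∫ s in Ioi (0:ℝ), c s ω * Y s ω
  set I : ℝ → Ω → ℝ := fun t ω => ∫ s in Ioc (0:ℝ) t, c s ω * Y s ω
  set R : ℝ → Ω → ℝ := fun t ω => ∫ s in Ioi t, c s ω * Y s ω
  have hcY : IsStronglyProgressive ℱ fun s ω => c s ω * Y s ω :=
    IsStronglyProgressive.mul hcprog hYprog
  have hcY0 : 0 ≤ fun p : Ω × ℝ => c p.2 p.1 * Y p.2 p.1 :=
    fun p => mul_nonneg (hcnonneg _ _) (hYnonneg _ _)
  have hint : Integrable (fun p : Ω × ℝ => c p.2 p.1 * Y p.2 p.1)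
      (μ.prod (volume.restrict (Ioi 0))) :=
    integrable_prod_of_lintegral_lintegral_ne_top
      (hcY.stronglyMeasurable_uncurry.comp_measurable measurable_swap).aestronglyMeasurable
      hcY0 (htotal ▸ ENNReal.ofReal_ne_top)
  have hC : Integrable C μ := hint.integral_prod_left
  have hI (t : ℝ) : Integrable (I t) μ :=
    hint.integrable_setIntegral_prod_of_subset Ioc_subset_Ioi_self
  have hsplit {t : ℝ} (ht : 0 ≤ t) : C =ᵐ[μ] I t + R t := by
    filter_upwards [hint.prod_right_ae] with ω hω
    exact setIntegral_Ioi_eq_setIntegral_Ioc_add_setIntegral_Ioi hω ht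
  have hNI (t : ℝ) : N t = M t - I t := funext fun ω => by simp [hM, I]
  have hEM (t : ℝ) (ht : 0 ≤ t) : ∫ ω, M t ω ∂μ = ∫ ω, C ω ∂μ := by
    rw [← integral_condExp (ℱ.le 0), integral_congr_ae ((hmart 0 t le_rfl ht).trans hM0),
      integral_integral_eq_toReal_lintegral_lintegral hint hcY0, htotal]
    simp [hx.le]
  obtain ⟨ha, hb⟩ := tendsto_integral_and_ae_eq_condExp_of_sub_ae_eq_sub hmart hMint hC
    hEM (fun t ht => (hsplit ht).mono fun ω hω => by
      simp only [Pi.sub_apply, Pi.add_apply, hω, hNI]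
      ring)
    (fun t ht => ⟨hNI t ▸ (hMint t ht).sub (hI t), hNnonneg t ht⟩)
    (fun t ht => ⟨hint.integrable_setIntegral_prod_of_subset (Ioi_subset_Ioi ht),
      ae_of_all _ fun ω => setIntegral_nonneg measurableSet_Ioi fun s _ => hcY0 (ω, s)⟩)
    (tendsto_integral_setIntegral_Ioi_atTop hint)
  refine ⟨ha, hb, (hC.uniformIntegrable_condExp fun t : Ici (0:ℝ) => ℱ.le t).ae_eq
    fun t => (hb t t.2).symm, fun t ht => ?_⟩
  calc N t = M t - I t := hNI t
    _ =ᵐ[μ] μ[C - I t | ℱ t] := sub_ae_eq_condExp_sub (ℱ.le t) (hb t ht) hC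
        (hcY.stronglyMeasurable_setIntegral_Ioc 0 t) (hI t)
    _ =ᵐ[μ] μ[R t | ℱ t] := condExp_congr_ae <| (hsplit ht).mono fun ω hω => by simp [hω]

/-- **Optimal wealth characterisation.** If `M_t := N_t + ∫₀^t c_s Y_s ds` is a
martingale with `M₀ = x` a.s. for a constant `x > 0`, and `E[∫₀^∞ c_t Y_t dt] = x`,
then: (a) `lim_{t→∞} E[N_t] = 0`; (b) for every `t ≥ 0`,
`M_t = E[∫₀^∞ c_s Y_s ds | ℱ_t]` a.s., so `M` is a uniformly integrable martingale;
and (c) for every `t ≥ 0`, `N_t = E[∫_t^∞ c_s Y_s ds | ℱ_t]` a.s. -/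
theorem optimal_wealth {Ω : Type*} {mΩ : MeasurableSpace Ω}
    (μ : Measure Ω) [IsProbabilityMeasure μ] (ℱ : Filtration ℝ mΩ)
    (N c Y : ℝ → Ω → ℝ)
    (hNadp : Adapted ℱ N)
    (hNnonneg : ∀ t, 0 ≤ t → 0 ≤ᵐ[μ] N t)
    (hcprog : ProgMeasurable ℱ c) (hYprog : ProgMeasurable ℱ Y)
    (hcnonneg : ∀ t ω, 0 ≤ c t ω) (hYnonneg : ∀ t ω, 0 ≤ Y t ω)
    (hcYint : ∀ t, 0 ≤ t → ∀ᵐ ω ∂μ, IntegrableOn (fun s => c s ω * Y s ω) (Ioc 0 t))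
    (M : ℝ → Ω → ℝ)
    (hM : ∀ t ω, M t ω = N t ω + ∫ s in Ioc (0:ℝ) t, c s ω * Y s ω)
    (hMint : ∀ t, 0 ≤ t → Integrable (M t) μ)
    (hmart : ∀ s t, 0 ≤ s → s ≤ t → μ[M t | ℱ s] =ᵐ[μ] M s)
    (x : ℝ) (hx : 0 < x)
    (hM0 : M 0 =ᵐ[μ] fun _ => x)
    (htotal : ∫⁻ ω, (∫⁻ s in Ioi (0:ℝ), ENNReal.ofReal (c s ω * Y s ω)) ∂μ =
      ENNReal.ofReal x) :
    Tendsto (fun t => ∫ ω, N t ω ∂μ) atTop (𝓝 0) ∧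
    (∀ t, 0 ≤ t →
      M t =ᵐ[μ] μ[fun ω => ∫ s in Ioi (0:ℝ), c s ω * Y s ω | ℱ t]) ∧
    UniformIntegrable (fun (t : ↥(Ici (0:ℝ))) => M t) 1 μ ∧
    (∀ t, 0 ≤ t →
      N t =ᵐ[μ] μ[fun ω => ∫ s in Ioi t, c s ω * Y s ω | ℱ t]) :=
  optimal_wealth_general μ ℱ N c Y hNnonneg hcprog hYprog hcnonneg hYnonneg M hM hMint hmart x hx
    hM0 htotal
end
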